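/- arXiv:1609.04891 — 2 statements merged into one kernel-verified Lean document; each statement's English description precedes it below -/
import Mathlib

section
/- (Proposition 2) Fix ε ∈ (0, 1), a > 0 and γ > 0, and for each positive integer n define the harvest blocklength m(n) = 2a/((1 + 0.5ε)^{2/n} − 1). Then the achievable-rate expression of Theorem 1 converges: lim_{n→∞} [ (n/2)·ln(1+γ) − √((2+ε)/ε · γ/(γ+1) · n) − n^{1/4} − 1 ] / (n + m(n)) = L(a, ε) · (1/2) ln(1+γ), where L(a, ε) = 1/(1 + a/ln(1 + 0.5ε)). -/
open Real Filter Topology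

/-- Proposition 2: with harvest blocklength `m n = 2a/((1 + ε/2)^(2/n) − 1)`, the
finite-blocklength achievable rate of Theorem 1 converges, as the transmit blocklength
`n → ∞`, to `L(a, ε) · (1/2) ln(1 + γ)` where `L(a, ε) = 1/(1 + a / ln(1 + ε/2))`. -/
theorem asymptotic_achievable_rate (ε a γ : ℝ) (hε0 : 0 < ε) (hε1 : ε < 1)
    (ha : 0 < a) (hγ : 0 < γ)
    (m : ℕ → ℝ) (hm : ∀ n : ℕ, m n = 2 * a / ((1 + 0.5 * ε) ^ ((2 : ℝ) / n) - 1)) :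
    Tendsto
      (fun n : ℕ =>
        ((n : ℝ) / 2 * Real.log (1 + γ) -
            Real.sqrt ((2 + ε) / ε * (γ / (γ + 1)) * n) - (n : ℝ) ^ ((1 : ℝ) / 4) - 1) /
          ((n : ℝ) + m n))
      atTop
      (𝓝 ((1 / (1 + a / Real.log (1 + 0.5 * ε))) * (1 / 2 * Real.log (1 + γ)))) := by
  set b : ℝ := 0.5 * ε with hbdef
  have hb0 : 0 < b := by positivity
  have h1b : (1 : ℝ) < 1 + b := by linarith
  have h1bpos : (0 : ℝ) < 1 + b := by linarith
  set L : ℝ := Real.log (1 + b) with hLdef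
  have hL : 0 < L := Real.log_pos h1b
  -- derivative of t ↦ (1+b)^t at 0 is L
  have hderiv : HasDerivAt (fun t : ℝ => (1 + b) ^ t) L 0 := by
    have h1 : HasDerivAt (fun t : ℝ => Real.exp (L * t)) (Real.exp (L * 0) * (L * 1)) 0 :=
      (Real.hasDerivAt_exp (L * 0)).comp 0 ((hasDerivAt_id (0 : ℝ)).const_mul L)
    have h2 : (fun t : ℝ => (1 + b) ^ t) = fun t : ℝ => Real.exp (L * t) := by
      funext t
      rw [Real.rpow_def_of_pos h1bpos]
    rw [h2]
    simpa using h1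
  have hslope : Tendsto (slope (fun t : ℝ => (1 + b) ^ t) 0) (𝓝[≠] 0) (𝓝 L) :=
    hasDerivAt_iff_tendsto_slope.mp hderiv
  have httend : Tendsto (fun n : ℕ => (2 : ℝ) / n) atTop (𝓝[≠] (0 : ℝ)) := by
    refine tendsto_nhdsWithin_iff.mpr ⟨tendsto_const_div_atTop_nhds_zero_nat 2, ?_⟩
    filter_upwards [eventually_ge_atTop 1] with n hn
    have hn0 : (0 : ℝ) < (n : ℝ) := by exact_mod_cast Nat.lt_of_lt_of_le Nat.zero_lt_one hn
    have : (0 : ℝ) < 2 / (n : ℝ) := by positivity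
    exact this.ne'
  have hA : Tendsto (fun n : ℕ => ((1 + b) ^ ((2 : ℝ) / n) - 1) * n) atTop (𝓝 (2 * L)) := by
    have h2 := (hslope.comp httend).const_mul 2
    refine Tendsto.congr' ?_ h2
    filter_upwards [eventually_ge_atTop 1] with n hn
    have hn0 : (0 : ℝ) < (n : ℝ) := by exact_mod_cast Nat.lt_of_lt_of_le Nat.zero_lt_one hn
    have hne : (n : ℝ) ≠ 0 := hn0.ne'
    simp only [Function.comp_apply, slope_def_field, Real.rpow_zero, sub_zero]
    field_simp
  have hmB : Tendsto (fun n : ℕ => m n / n) atTop (𝓝 (a / L)) := by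
    have hdiv : Tendsto (fun n : ℕ => 2 * a / (((1 + b) ^ ((2 : ℝ) / n) - 1) * n)) atTop
        (𝓝 (2 * a / (2 * L))) :=
      tendsto_const_nhds.div hA (by positivity)
    have hval : 2 * a / (2 * L) = a / L := by
      rw [mul_div_mul_left _ _ (two_ne_zero)]
    rw [← hval]
    refine Tendsto.congr ?_ hdiv
    intro n
    rw [hm n, div_div]
  have hD : Tendsto (fun n : ℕ => 1 + m n / n) atTop (𝓝 (1 + a / L)) :=
    tendsto_const_nhds.add hmB
  have hDne : 1 + a / L ≠ 0 := by positivity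
  set c : ℝ := (2 + ε) / ε * (γ / (γ + 1)) with hcdef
  have hc0 : 0 < c := by positivity
  -- numerator over n tends to (1/2) log(1+γ)
  have h1 : Tendsto (fun n : ℕ => Real.sqrt c * (n : ℝ) ^ (-(1 / 2) : ℝ)) atTop (𝓝 0) := by
    have := ((tendsto_rpow_neg_atTop (by norm_num : (0:ℝ) < 1/2)).comp
      (tendsto_natCast_atTop_atTop (R := ℝ))).const_mul (Real.sqrt c)
    simpa using this
  have h2 : Tendsto (fun n : ℕ => (n : ℝ) ^ (-(3 / 4) : ℝ)) atTop (𝓝 0) :=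
    (tendsto_rpow_neg_atTop (by norm_num : (0:ℝ) < 3/4)).comp
      (tendsto_natCast_atTop_atTop (R := ℝ))
  have h3 : Tendsto (fun n : ℕ => (1 : ℝ) / n) atTop (𝓝 0) :=
    tendsto_one_div_atTop_nhds_zero_nat
  have hN : Tendsto (fun n : ℕ =>
      1 / 2 * Real.log (1 + γ) - Real.sqrt c * (n : ℝ) ^ (-(1 / 2) : ℝ)
        - (n : ℝ) ^ (-(3 / 4) : ℝ) - 1 / n) atTop (𝓝 (1 / 2 * Real.log (1 + γ))) := by
    have := (((tendsto_const_nhds (x := 1 / 2 * Real.log (1 + γ)) (f := atTop (α := ℕ))).sub h1).sub h2).sub h3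
    simpa using this
  have hmain := hN.div hD hDne
  have hval : 1 / 2 * Real.log (1 + γ) / (1 + a / L) =
      1 / (1 + a / Real.log (1 + 0.5 * ε)) * (1 / 2 * Real.log (1 + γ)) := by
    rw [div_eq_mul_inv, ← one_div, mul_comm, hLdef, hbdef]
  rw [← hval]
  refine Tendsto.congr' ?_ hmain
  filter_upwards [eventually_ge_atTop 1] with n hn
  have hn0 : (0 : ℝ) < (n : ℝ) := by exact_mod_cast Nat.lt_of_lt_of_le Nat.zero_lt_one hn
  have hne : (n : ℝ) ≠ 0 := hn0.ne'
  -- m n is positive for n ≥ 1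
  have hrpow1 : (1 : ℝ) < (1 + b) ^ ((2 : ℝ) / n) :=
    Real.one_lt_rpow_iff_of_pos h1bpos |>.mpr (Or.inl ⟨h1b, by positivity⟩)
  have hmpos : 0 < m n := by
    rw [hm n]
    have : 0 < (1 + b) ^ ((2 : ℝ) / n) - 1 := by linarith
    positivity
  -- rewrite the whole expression
  have hrsub : ∀ p q : ℝ, (n : ℝ) ^ p / (n : ℝ) ^ q = (n : ℝ) ^ (p - q) :=
    fun p q => (Real.rpow_sub hn0 p q).symm
  have hsqrt : Real.sqrt (c * n) / n = Real.sqrt c * (n : ℝ) ^ (-(1 / 2) : ℝ) := by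
    rw [Real.sqrt_mul hc0.le, Real.sqrt_eq_rpow (n : ℝ), mul_div_assoc]
    congr 1
    calc ((n : ℝ) ^ ((1:ℝ)/2)) / (n : ℝ) = (n : ℝ) ^ ((1:ℝ)/2) / (n : ℝ) ^ (1:ℝ) := by
          rw [Real.rpow_one]
      _ = (n : ℝ) ^ ((1:ℝ)/2 - 1) := hrsub _ _
      _ = (n : ℝ) ^ (-(1 / 2) : ℝ) := by norm_num
  have hquarter : (n : ℝ) ^ ((1 : ℝ) / 4) / n = (n : ℝ) ^ (-(3 / 4) : ℝ) := by
    calc ((n : ℝ) ^ ((1:ℝ)/4)) / (n : ℝ) = (n : ℝ) ^ ((1:ℝ)/4) / (n : ℝ) ^ (1:ℝ) := by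
          rw [Real.rpow_one]
      _ = (n : ℝ) ^ ((1:ℝ)/4 - 1) := hrsub _ _
      _ = (n : ℝ) ^ (-(3 / 4) : ℝ) := by norm_num
  have hhalf : (n : ℝ) / 2 * Real.log (1 + γ) / n = 1 / 2 * Real.log (1 + γ) := by
    field_simp
  have hDrw : (1 : ℝ) + m n / n = ((n : ℝ) + m n) / n := by
    field_simp
  simp only [Pi.div_apply]
  rw [← hhalf, ← hsqrt, ← hquarter, div_sub_div_same, div_sub_div_same, div_sub_div_same,
    hDrw, div_div_div_cancel_right₀ hne]
end

section
/- (Corollary 3) Fix ε ∈ (0, 1), σ² > 0 and P_E > 0, and set b = (P_E/σ²) ln(1 + 0.5ε). Consider the asymptotic achievable rate as a function of the transmit power P_t > 0: f(P_t) = (1/2) ln(1 + P_t/σ²) / (1 + (P_t/P_E)/ln(1 + 0.5ε)). Then f attains a unique maximum on (0, ∞) at P*_{t,∞} = σ² γ*, where γ* is the unique positive solution of (1 + γ) ln(1 + γ) − γ = b. -/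
/-!
With `γ = Pt/σ²` and `b = (PE/σ²) ln(1 + ε/2)` the rate is `(b/2) · ln(1 + γ)/(b + γ)`.
The defining equation says `b + γ* = (1 + γ*) ln(1 + γ*)`, so the value at `γ*` is
`(b/2)/(1 + γ*)`, and `ln(1 + γ)/(b + γ) < 1/(1 + γ*)` for `γ ≠ γ*` is exactly the strict
tangent-line inequality for the concave `ln` at `1 + γ*`. The same inequality at `γ = 0` gives `b > 0`.
-/

open Real

lemma mul_log_div_lt_sub {a y : ℝ} (ha : 0 < a) (hy : 0 < y) (hne : y ≠ a) :
    a * log (y / a) < y - a := by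
  have h := log_lt_sub_one_of_pos (div_pos hy ha) (by rwa [ne_eq, div_eq_one_iff_eq ha.ne'])
  calc a * log (y / a) < a * (y / a - 1) := mul_lt_mul_of_pos_left h ha
    _ = y - a := by field_simp

lemma mul_log_one_add_lt {s x : ℝ} (hs : -1 < s) (hx : -1 < x) (hne : x ≠ s) :
    (1 + s) * log (1 + x) < (1 + s) * log (1 + s) - s + x := by
  have h := mul_log_div_lt_sub (a := 1 + s) (y := 1 + x) (by linarith) (by linarith)
    (by contrapose! hne; linarith)
  rw [log_div (by linarith) (by linarith)] at h
  linarith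

lemma log_one_add_div_lt {b s x : ℝ} (hs : -1 < s) (hs0 : s ≠ 0)
    (hb : (1 + s) * log (1 + s) - s = b) (hx : -1 < x) (hbx : 0 < b + x) (hne : x ≠ s) :
    log (1 + x) / (b + x) < log (1 + s) / (b + s) := by
  have hs1 : 0 < 1 + s := by linarith
  have hlog : log (1 + s) ≠ 0 := log_ne_zero_of_pos_of_ne_one hs1 (by simpa using hs0)
  have hvalue : log (1 + s) / (b + s) = 1 / (1 + s) := by
    rw [show b + s = (1 + s) * log (1 + s) by linarith]
    field_simp
  rw [hvalue, div_lt_div_iff₀ hbx hs1]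
  linarith [mul_log_one_add_lt hs hx hne]

lemma rate_eq_mul_div {σ2 PE L P : ℝ} (hσ2 : σ2 ≠ 0) (hPE : PE ≠ 0) (hL : L ≠ 0) :
    1 / 2 * log (1 + P / σ2) / (1 + P / PE / L) =
      PE / σ2 * L / 2 * (log (1 + P / σ2) / (PE / σ2 * L + P / σ2)) := by
  have hden : 1 + P / PE / L = (PE / σ2 * L + P / σ2) / (PE / σ2 * L) := by
    field_simp
  rw [hden, div_div_eq_mul_div]
  ring

theorem optimal_transmit_power_general (ε σ2 PE : ℝ)
    (hσ2 : 0 < σ2)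
    (γstar : ℝ) (hγpos : 0 < γstar)
    (hγeq : (1 + γstar) * Real.log (1 + γstar) - γstar = PE / σ2 * Real.log (1 + 0.5 * ε)) :
    ∀ Pt : ℝ, 0 < Pt → Pt ≠ σ2 * γstar →
      (1 / 2 * Real.log (1 + Pt / σ2)) / (1 + (Pt / PE) / Real.log (1 + 0.5 * ε)) <
        (1 / 2 * Real.log (1 + (σ2 * γstar) / σ2)) /
          (1 + ((σ2 * γstar) / PE) / Real.log (1 + 0.5 * ε)) := by
  intro Pt hPt hne
  have hs : -1 < γstar := by linarith
  have hγ : 0 < Pt / σ2 := div_pos hPt hσ2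
  have hγne : Pt / σ2 ≠ γstar := by
    rintro h
    exact hne (by rw [← h, mul_div_cancel₀ _ hσ2.ne'])
  have hb : 0 < PE / σ2 * log (1 + 0.5 * ε) := by
    simpa [← hγeq] using mul_log_one_add_lt hs (x := 0) (by norm_num) hγpos.ne
  obtain ⟨hPE, hL⟩ : PE ≠ 0 ∧ log (1 + 0.5 * ε) ≠ 0 := by
    simpa [hσ2.ne', not_or] using hb.ne'
  rw [rate_eq_mul_div hσ2.ne' hPE hL, rate_eq_mul_div hσ2.ne' hPE hL,
    mul_div_cancel_left₀ _ hσ2.ne']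
  exact mul_lt_mul_of_pos_left
    (log_one_add_div_lt hs hγpos.ne' hγeq (by linarith) (by linarith) hγne) (by positivity)

/-- Corollary 3: the asymptotic achievable rate
`f(Pt) = (1/2) ln(1 + Pt/σ²) / (1 + (Pt/PE)/ln(1 + ε/2))` attains a unique maximum over
`Pt ∈ (0, ∞)` at `Pt = σ² γ*`, where `γ*` is the unique positive solution of
`(1 + γ) ln(1 + γ) − γ = (PE/σ²) ln(1 + ε/2)`. -/
theorem optimal_transmit_power (ε σ2 PE : ℝ) (hε0 : 0 < ε) (hε1 : ε < 1)
    (hσ2 : 0 < σ2) (hPE : 0 < PE)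
    (γstar : ℝ) (hγpos : 0 < γstar)
    (hγeq : (1 + γstar) * Real.log (1 + γstar) - γstar = PE / σ2 * Real.log (1 + 0.5 * ε)) :
    ∀ Pt : ℝ, 0 < Pt → Pt ≠ σ2 * γstar →
      (1 / 2 * Real.log (1 + Pt / σ2)) / (1 + (Pt / PE) / Real.log (1 + 0.5 * ε)) <
        (1 / 2 * Real.log (1 + (σ2 * γstar) / σ2)) /
          (1 + ((σ2 * γstar) / PE) / Real.log (1 + 0.5 * ε)) :=
  optimal_transmit_power_general ε σ2 PE hσ2 γstar hγpos hγeq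
end
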